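/- For the reduced planar system dφ/dt = √(ab) μ(φ)^{-1/2} p, dp/dt = (1/2)√(ab)(a−b) μ(φ)^{-3/2} sin(2φ)(c² − p²) with b > a > 0 and c > 0, restricted to the strip |p| ≤ c: the equilibria are exactly the points (φ, p) = (jπ/2, 0) with j ∈ ℤ; at each equilibrium the Jacobian matrix of the vector field has zero trace, and its determinant equals b(b−a)c²/a > 0 when j is even (so the eigenvalues are a purely imaginary conjugate pair) and equals −a(b−a)c²/b < 0 when j is odd (so the eigenvalues are real, nonzero and of opposite signs, i.e. the equilibrium is a saddle). -/

import Mathlib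

open Real

noncomputable section

/-- `μ(φ) = a cos²φ + b sin²φ`. -/
def muEll (a b φ : ℝ) : ℝ := a * Real.cos φ ^ 2 + b * Real.sin φ ^ 2

/-- Right-hand side of the `φ` equation: `√(ab) μ(φ)^{-1/2} p`. -/
def phiDot (a b : ℝ) (φ p : ℝ) : ℝ :=
  Real.sqrt (a * b) * muEll a b φ ^ (-(1 / 2) : ℝ) * p

/-- Right-hand side of the `p` equation:
`(1/2)√(ab)(a−b) μ(φ)^{-3/2} sin(2φ)(c² − p²)`. -/
def pDot (a b c : ℝ) (φ p : ℝ) : ℝ :=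
  (1 / 2) * Real.sqrt (a * b) * (a - b) * muEll a b φ ^ (-(3 / 2) : ℝ) *
    Real.sin (2 * φ) * (c ^ 2 - p ^ 2)


/-- The reduced planar Hug vector field on the ellipse. -/
def reducedField (a b c : ℝ) (q : ℝ × ℝ) : ℝ × ℝ :=
  (phiDot a b q.1 q.2, pDot a b c q.1 q.2)


/-!
Since `μ > 0`, the `φ`-component vanishes only at `p = 0`, and there (as `c ≠ 0`) the
`p`-component vanishes exactly where `sin 2φ = 0`. On the axis `p = 0` the Jacobian is
antidiagonal, with entries `√(ab) μ^{-1/2}` and `c²` times the `φ`-derivative of the coefficient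
of the `p`-equation; at a zero of `sin 2φ` that derivative is the coefficient with `sin 2φ`
replaced by `2 cos 2φ`. So the trace is `0` and the determinant is
`ab(b - a)c² cos 2φ / μ(φ)²`, where `cos 2φ = ±1` and `μ(φ) = a` or `b` at `φ = jπ/2`
according to the parity of `j`.
-/

lemma sin_two_mul_eq_zero_iff {φ : ℝ} : sin (2 * φ) = 0 ↔ ∃ j : ℤ, φ = j * (π / 2) := by
  rw [sin_eq_zero_iff]
  refine exists_congr fun j => ?_
  constructor <;> intro h <;> linarith

lemma rpow_neg_half_mul_rpow_neg_three_halves {x : ℝ} (hx : 0 < x) :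
    x ^ (-(1 / 2) : ℝ) * x ^ (-(3 / 2) : ℝ) = (x ^ 2)⁻¹ := by
  rw [← rpow_add hx]
  norm_num [rpow_neg hx.le]

lemma trace_prod_smul_snd_smul_fst {R : Type*} [CommRing R] (A B : R) :
    LinearMap.trace R (R × R) ((A • LinearMap.snd R R R).prod (B • LinearMap.fst R R R)) = 0 := by
  rw [LinearMap.trace_eq_matrix_trace R (Module.Basis.finTwoProd R)]
  simp [Matrix.trace_fin_two, LinearMap.toMatrix_apply]

lemma det_prod_smul_snd_smul_fst {R : Type*} [CommRing R] (A B : R) :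
    LinearMap.det ((A • LinearMap.snd R R R).prod (B • LinearMap.fst R R R)) = -(A * B) := by
  rw [← LinearMap.det_toMatrix (Module.Basis.finTwoProd R), Matrix.det_fin_two]
  simp [LinearMap.toMatrix_apply]

lemma hasDerivAt_mul_sin_two_mul {u : ℝ → ℝ} {φ₀ : ℝ} (hu : DifferentiableAt ℝ u φ₀)
    (hs : sin (2 * φ₀) = 0) :
    HasDerivAt (fun φ => u φ * sin (2 * φ)) (u φ₀ * (2 * cos (2 * φ₀))) φ₀ := by
  have hsin : HasDerivAt (fun φ => sin (2 * φ)) (cos (2 * φ₀) * 2) φ₀ := by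
    simpa using ((hasDerivAt_id φ₀).const_mul 2).sin
  exact (hu.hasDerivAt.mul hsin).congr_deriv (by rw [hs]; ring)

/-- At `p = 0` the terms `g' φ * p` and `-2 p h φ` of the Jacobian vanish. -/
lemma hasFDerivAt_prodMk_at_snd_eq_zero {g h : ℝ → ℝ} {h' : ℝ} (c φ₀ : ℝ)
    (hg : DifferentiableAt ℝ g φ₀) (hh : HasDerivAt h h' φ₀) :
    HasFDerivAt (fun q : ℝ × ℝ => (g q.1 * q.2, h q.1 * (c ^ 2 - q.2 ^ 2)))
      ((g φ₀ • ContinuousLinearMap.snd ℝ ℝ ℝ).prod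
        ((h' * c ^ 2) • ContinuousLinearMap.fst ℝ ℝ ℝ)) (φ₀, 0) := by
  have hfst := hasFDerivAt_fst (𝕜 := ℝ) (p := ((φ₀, 0) : ℝ × ℝ))
  have hsnd := hasFDerivAt_snd (𝕜 := ℝ) (p := ((φ₀, 0) : ℝ × ℝ))
  have hg₁ : HasFDerivAt (fun q : ℝ × ℝ => g q.1)
      (deriv g φ₀ • ContinuousLinearMap.fst ℝ ℝ ℝ) (φ₀, 0) :=
    hg.hasDerivAt.comp_hasFDerivAt _ hfst
  have hh₁ : HasFDerivAt (fun q : ℝ × ℝ => h q.1) (h' • ContinuousLinearMap.fst ℝ ℝ ℝ) (φ₀, 0) :=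
    hh.comp_hasFDerivAt _ hfst
  refine HasFDerivAt.prodMk ?_ ?_
  · exact (hg₁.mul hsnd).congr_fderiv (by ext <;> simp)
  · exact (hh₁.mul ((hasFDerivAt_const _ _).sub (hsnd.pow 2))).congr_fderiv
      (by ext <;> simp [mul_comm])

lemma muEll_eq_cos_two_mul (a b φ : ℝ) :
    muEll a b φ = (a + b) / 2 + (a - b) / 2 * cos (2 * φ) := by
  rw [muEll, cos_two_mul, cos_sq']
  ring

lemma muEll_pos {a b : ℝ} (ha : 0 < a) (hb : 0 < b) (φ : ℝ) : 0 < muEll a b φ := by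
  have hsc := sin_sq_add_cos_sq φ
  unfold muEll
  nlinarith [mul_nonneg ha.le (sq_nonneg (cos φ)), mul_nonneg hb.le (sq_nonneg (sin φ)),
    mul_pos ha hb]

lemma differentiableAt_muEll_rpow {a b : ℝ} (ha : 0 < a) (hb : 0 < b) (r φ : ℝ) :
    DifferentiableAt ℝ (fun φ => muEll a b φ ^ r) φ :=
  (show DifferentiableAt ℝ (muEll a b) φ by unfold muEll; fun_prop).rpow_const
    (Or.inl (muEll_pos ha hb φ).ne')

lemma reducedField_eq_zero_iff {a b c : ℝ} (ha : 0 < a) (hb : 0 < b) (hab : a ≠ b) (hc : c ≠ 0)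
    (q : ℝ × ℝ) : reducedField a b c q = 0 ↔ (∃ j : ℤ, q.1 = j * (π / 2)) ∧ q.2 = 0 := by
  obtain ⟨φ, p⟩ := q
  have hsqrt : √(a * b) ≠ 0 := (sqrt_pos.2 (mul_pos ha hb)).ne'
  have hrpow (r : ℝ) : muEll a b φ ^ r ≠ 0 := (rpow_pos_of_pos (muEll_pos ha hb φ) r).ne'
  simp only [reducedField, phiDot, pDot, Prod.mk_eq_zero, ← sin_two_mul_eq_zero_iff]
  constructor
  · rintro ⟨hφ, hp⟩
    obtain rfl : p = 0 := by simpa [hsqrt, hrpow] using hφ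
    simpa [hsqrt, hrpow, sub_ne_zero.2 hab, hc] using hp
  · rintro ⟨hs, rfl⟩
    simp [hs]

lemma hasFDerivAt_reducedField {a b : ℝ} (c : ℝ) (ha : 0 < a) (hb : 0 < b) {φ₀ : ℝ}
    (hs : sin (2 * φ₀) = 0) :
    HasFDerivAt (reducedField a b c)
      (((√(a * b) * muEll a b φ₀ ^ (-(1 / 2) : ℝ)) • ContinuousLinearMap.snd ℝ ℝ ℝ).prod
        (((1 / 2) * √(a * b) * (a - b) * muEll a b φ₀ ^ (-(3 / 2) : ℝ) *
          (2 * cos (2 * φ₀)) * c ^ 2) • ContinuousLinearMap.fst ℝ ℝ ℝ)) (φ₀, 0) :=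
  hasFDerivAt_prodMk_at_snd_eq_zero c φ₀
    ((differentiableAt_muEll_rpow ha hb _ φ₀).const_mul _)
    (hasDerivAt_mul_sin_two_mul ((differentiableAt_muEll_rpow ha hb _ φ₀).const_mul _) hs)

lemma trace_fderiv_reducedField {a b : ℝ} (c : ℝ) (ha : 0 < a) (hb : 0 < b) {φ₀ : ℝ}
    (hs : sin (2 * φ₀) = 0) :
    LinearMap.trace ℝ (ℝ × ℝ) (fderiv ℝ (reducedField a b c) (φ₀, 0)).toLinearMap = 0 := by
  rw [(hasFDerivAt_reducedField c ha hb hs).fderiv]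
  exact trace_prod_smul_snd_smul_fst _ _

lemma det_fderiv_reducedField {a b : ℝ} (c : ℝ) (ha : 0 < a) (hb : 0 < b) {φ₀ : ℝ}
    (hs : sin (2 * φ₀) = 0) :
    LinearMap.det (fderiv ℝ (reducedField a b c) (φ₀, 0)).toLinearMap =
      a * b * (b - a) * c ^ 2 * cos (2 * φ₀) / muEll a b φ₀ ^ 2 := by
  rw [(hasFDerivAt_reducedField c ha hb hs).fderiv]
  simp only [ContinuousLinearMap.coe_prod, ContinuousLinearMap.toLinearMap_smul,
    ContinuousLinearMap.coe_fst, ContinuousLinearMap.coe_snd, det_prod_smul_snd_smul_fst]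
  have hμ := muEll_pos ha hb φ₀
  calc -(√(a * b) * muEll a b φ₀ ^ (-(1 / 2) : ℝ) * ((1 / 2) * √(a * b) * (a - b) *
          muEll a b φ₀ ^ (-(3 / 2) : ℝ) * (2 * cos (2 * φ₀)) * c ^ 2))
      = (√(a * b) * √(a * b)) * (muEll a b φ₀ ^ (-(1 / 2) : ℝ) * muEll a b φ₀ ^ (-(3 / 2) : ℝ)) *
          ((b - a) * c ^ 2 * cos (2 * φ₀)) := by ring
    _ = a * b * (b - a) * c ^ 2 * cos (2 * φ₀) / muEll a b φ₀ ^ 2 := by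
      rw [mul_self_sqrt (mul_pos ha hb).le, rpow_neg_half_mul_rpow_neg_three_halves hμ]
      field_simp

theorem reduced_hug_equilibria_trace_det
    (a b c : ℝ) (hab : a < b) (ha : 0 < a) (hc : 0 < c) :
    (∀ q : ℝ × ℝ, |q.2| ≤ c →
      (reducedField a b c q = 0 ↔ (∃ j : ℤ, q.1 = j * (π / 2)) ∧ q.2 = 0)) ∧
    (∀ j : ℤ,
      LinearMap.trace ℝ (ℝ × ℝ)
          (fderiv ℝ (reducedField a b c) ((j : ℝ) * (π / 2), 0)).toLinearMap = 0 ∧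
      (Even j →
        LinearMap.det
            (fderiv ℝ (reducedField a b c) ((j : ℝ) * (π / 2), 0)).toLinearMap
          = b * (b - a) * c ^ 2 / a) ∧
      (Odd j →
        LinearMap.det
            (fderiv ℝ (reducedField a b c) ((j : ℝ) * (π / 2), 0)).toLinearMap
          = -(a * (b - a) * c ^ 2 / b))) := by
  have hb : 0 < b := ha.trans hab
  refine ⟨fun q _ => reducedField_eq_zero_iff ha hb hab.ne hc.ne' q, fun j => ?_⟩
  have hs : sin (2 * (j * (π / 2))) = 0 := sin_two_mul_eq_zero_iff.2 ⟨j, rfl⟩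
  have hcos : cos (2 * (j * (π / 2))) = (-1) ^ j := by
    rw [show 2 * (j * (π / 2)) = j * π by ring, cos_int_mul_pi]
  refine ⟨trace_fderiv_reducedField c ha hb hs, fun hj => ?_, fun hj => ?_⟩
  · have hcos_one : cos (2 * (j * (π / 2))) = 1 := hcos.trans hj.neg_one_zpow
    rw [det_fderiv_reducedField c ha hb hs, muEll_eq_cos_two_mul, hcos_one,
      show (a + b) / 2 + (a - b) / 2 * 1 = a by ring]
    field_simp
  · have hcos_neg_one : cos (2 * (j * (π / 2))) = -1 := hcos.trans hj.neg_one_zpow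
    rw [det_fderiv_reducedField c ha hb hs, muEll_eq_cos_two_mul, hcos_neg_one,
      show (a + b) / 2 + (a - b) / 2 * -1 = b by ring]
    field_simp
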